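/- arXiv:0803.2188 — 3 statements merged into one kernel-verified Lean document; each statement's English description precedes it below -/
import Mathlib

section
/- Let V be a vector space of dimension n = r + s over a field with r ≥ s ≥ 0, with basis e_1, …, e_n, and let u be the linear endomorphism defined by u(e_i) = 0 for 1 ≤ i ≤ r and u(e_i) = e_{i−r} for r+1 ≤ i ≤ n. Then the space of linear endomorphisms of V commuting with u has dimension r² + s². -/
/-!
Splitting the basis as `Fin r ⊕ Fin s`, the matrix of `u` is `U = [[0, J], [0, 0]]` with
`J : K^s → K^r` the inclusion of the first `s` coordinates, which has a left inverse since
`s ≤ r`. A block matrix `[[a, b], [c, d]]` commutes with `U` iff `c = 0` and `a J = J d`, so the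
commutant is the kernel of `M ↦ (c, a J - J d)`, a surjective map onto a space of dimension
`2rs`; rank–nullity gives `(r + s)² - 2rs = r² + s²`.
-/

open Module

section Commutant

variable {K A B : Type*} [Field K] [Ring A] [Algebra K A] [Ring B] [Algebra K B]

theorem mem_ker_mulLeft_sub_mulRight {a x : A} :
    x ∈ LinearMap.ker (LinearMap.mulLeft K a - LinearMap.mulRight K a) ↔ a * x = x * a := by
  simp [sub_eq_zero]

theorem AlgEquiv.finrank_ker_mulLeft_sub_mulRight (e : A ≃ₐ[K] B) (a : A) :
    finrank K (LinearMap.ker (LinearMap.mulLeft K (e a) - LinearMap.mulRight K (e a))) =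
      finrank K (LinearMap.ker (LinearMap.mulLeft K a - LinearMap.mulRight K a)) := by
  have hmap : LinearMap.ker (LinearMap.mulLeft K (e a) - LinearMap.mulRight K (e a)) =
      (LinearMap.ker (LinearMap.mulLeft K a - LinearMap.mulRight K a)).map
        e.toLinearEquiv.toLinearMap := by
    ext x
    rw [Submodule.mem_map_equiv, mem_ker_mulLeft_sub_mulRight, mem_ker_mulLeft_sub_mulRight,
      ← e.symm.injective.eq_iff]
    simp
  rw [hmap, LinearEquiv.finrank_map_eq]

end Commutant

namespace Matrix

theorem one_submatrix_mul_one_submatrix {R : Type*} [NonAssocSemiring R] {m n : Type*}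
    [Fintype m] [DecidableEq m] [DecidableEq n] {f : n → m} (hf : Function.Injective f) :
    (1 : Matrix m m R).submatrix f id * (1 : Matrix m m R).submatrix id f = 1 := by
  rw [← submatrix_mul _ _ _ _ _ Function.bijective_id, Matrix.one_mul, submatrix_one _ hf]

variable {K : Type*} [Field K] {m n : Type*} [Fintype m] [Fintype n] [DecidableEq n]

def squareZeroCommDefect (J : Matrix m n K) :
    Matrix (m ⊕ n) (m ⊕ n) K →ₗ[K] Matrix n m K × Matrix m n K where
  toFun M := (M.toBlocks₂₁, M.toBlocks₁₁ * J - J * M.toBlocks₂₂)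
  map_add' M N := by
    change (M.toBlocks₂₁ + N.toBlocks₂₁, (M.toBlocks₁₁ + N.toBlocks₁₁) * J -
      J * (M.toBlocks₂₂ + N.toBlocks₂₂)) = _
    simp only [Matrix.add_mul, Matrix.mul_add, Prod.mk_add_mk]
    abel_nf
  map_smul' c M := by
    change (c • M.toBlocks₂₁, (c • M.toBlocks₁₁) * J - J * (c • M.toBlocks₂₂)) = _
    simp [smul_sub]

theorem squareZeroCommDefect_surjective {J : Matrix m n K} {L : Matrix n m K} (hLJ : L * J = 1) :
    Function.Surjective (squareZeroCommDefect J) := by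
  rintro ⟨c, X⟩
  refine ⟨fromBlocks (X * L) 0 c 0, ?_⟩
  simp [squareZeroCommDefect, Matrix.mul_assoc, hLJ]

variable [DecidableEq m]

theorem fromBlocks_mem_ker_mulLeft_sub_mulRight {J : Matrix m n K} {L : Matrix n m K}
    (hLJ : L * J = 1) {a : Matrix m m K} {b : Matrix m n K} {c : Matrix n m K}
    {d : Matrix n n K} :
    fromBlocks a b c d ∈ LinearMap.ker
        (LinearMap.mulLeft K (fromBlocks 0 J 0 0 : Matrix (m ⊕ n) (m ⊕ n) K) -
          LinearMap.mulRight K (fromBlocks 0 J 0 0)) ↔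
      c = 0 ∧ a * J = J * d := by
  rw [mem_ker_mulLeft_sub_mulRight, fromBlocks_multiply, fromBlocks_multiply]
  simp only [Matrix.zero_mul, Matrix.mul_zero, zero_add, add_zero, fromBlocks_inj]
  constructor
  · rintro ⟨hJc, hJd, -, -⟩
    refine ⟨?_, hJd.symm⟩
    rw [← Matrix.one_mul c, ← hLJ, Matrix.mul_assoc, hJc, Matrix.mul_zero]
  · rintro ⟨rfl, h⟩
    simp [h]

theorem ker_squareZeroCommDefect {J : Matrix m n K} {L : Matrix n m K} (hLJ : L * J = 1) :
    LinearMap.ker (squareZeroCommDefect J) = LinearMap.ker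
        (LinearMap.mulLeft K (fromBlocks 0 J 0 0 : Matrix (m ⊕ n) (m ⊕ n) K) -
          LinearMap.mulRight K (fromBlocks 0 J 0 0)) := by
  ext M
  rw [← fromBlocks_toBlocks M, fromBlocks_mem_ker_mulLeft_sub_mulRight hLJ, LinearMap.mem_ker]
  simp [squareZeroCommDefect, sub_eq_zero]

theorem finrank_ker_mulLeft_sub_mulRight_fromBlocks {J : Matrix m n K} {L : Matrix n m K}
    (hLJ : L * J = 1) :
    finrank K (LinearMap.ker
        (LinearMap.mulLeft K (fromBlocks 0 J 0 0 : Matrix (m ⊕ n) (m ⊕ n) K) -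
          LinearMap.mulRight K (fromBlocks 0 J 0 0))) =
      Fintype.card m ^ 2 + Fintype.card n ^ 2 := by
  have h := (squareZeroCommDefect J).finrank_range_add_finrank_ker
  rw [LinearMap.range_eq_top.2 (squareZeroCommDefect_surjective hLJ), finrank_top,
    ker_squareZeroCommDefect hLJ] at h
  simp only [finrank_prod, finrank_matrix, finrank_self, Fintype.card_sum] at h
  nlinarith

end Matrix

theorem toMatrix_reindex_finSumFinEquiv_eq_fromBlocks {K : Type*} [Field K] {r s : ℕ}
    (hrs : s ≤ r) (u : Module.End K (Fin (r + s) → K))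
    (hu : ∀ j : Fin (r + s), u (Pi.single j 1) =
      if r ≤ j.val then
        Pi.single (⟨j.val - r, (Nat.sub_le _ _).trans_lt j.isLt⟩ : Fin (r + s)) 1
      else 0) :
    (LinearMap.toMatrixAlgEquiv'.trans (Matrix.reindexAlgEquiv K K finSumFinEquiv.symm)) u =
      Matrix.fromBlocks 0 ((1 : Matrix (Fin r) (Fin r) K).submatrix id (Fin.castLE hrs)) 0 0 := by
  ext (i | i) (j | j) <;>
    simp [LinearMap.toMatrixAlgEquiv'_apply, hu, Pi.single_apply, Matrix.one_apply, Fin.ext_iff,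
      Nat.not_le.2 j.isLt]
  omega

/-- for the nilpotent endomorphism `u` of `K^(r+s)` with `u(e_i) = 0` for
`i ≤ r` and `u(e_i) = e_{i-r}` for `i > r` (0-indexed: `u(e_j) = 0` for `j < r` and
`u(e_j) = e_{j-r}` for `j ≥ r`), the space of endomorphisms commuting with `u`
has dimension `r² + s²`. -/
theorem stmt1 (K : Type*) [Field K] (r s : ℕ) (hrs : s ≤ r)
    (u : Module.End K (Fin (r + s) → K))
    (hu : ∀ j : Fin (r + s), u (Pi.single j 1) =
      if h : r ≤ j.val then Pi.single (⟨j.val - r, by have := j.isLt; omega⟩ : Fin (r + s)) 1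
      else 0) :
    finrank K ↥(LinearMap.ker (LinearMap.mulLeft K u - LinearMap.mulRight K u))
      = r ^ 2 + s ^ 2 := by
  rw [← (LinearMap.toMatrixAlgEquiv'.trans
      (Matrix.reindexAlgEquiv K K finSumFinEquiv.symm)).finrank_ker_mulLeft_sub_mulRight u,
    toMatrix_reindex_finSumFinEquiv_eq_fromBlocks hrs u hu,
    Matrix.finrank_ker_mulLeft_sub_mulRight_fromBlocks
      (Matrix.one_submatrix_mul_one_submatrix (Fin.castLE_injective hrs)),
    Fintype.card_fin, Fintype.card_fin]
end

section
/- Let T be a standard tableau of a two-column shape with first-column entries a_1 < … < a_r and second-column entries b_1 < … < b_s, and let T* be the associated row-standard tableau defined by: a*_1 = b_1 − 1; for 2 ≤ p ≤ s, a*_p is the maximal element of {a_1,…,a_r} \ {a*_1,…,a*_{p−1}} that is less than b_p; and for p > s, a*_p is the minimal remaining element. Then T* is well-defined (each a*_p exists) and is row-standard, i.e. a*_p < b_p for all 1 ≤ p ≤ s. -/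
/-!
Run the greedy construction on the set `A` of first-column entries and let `R_p` be the set of
entries still unused before step `p`. Since `R_p = A \ {a*_0, …, a*_{p-1}}`, any `B ⊆ A` with more
than `p` elements meets `R_p`. For `p < s` take `B = {a_0, …, a_p}`: all of these lie below
`b_p` by column-standardness, so some unused entry lies below `b_p` and `a*_p < b_p` exists; for
`p ≥ s` take `B = A`, of size `r > p`. Hence the `a*_p` are distinct and exhaust `A`. Finally,
every entry below `b_0` must lie in the first column (the second column starts at `b_0`), so the
first pick, the greatest entry below `b_0`, is `b_0 - 1`.
-/

/-- Entry map of a two-column tableau with first-column entries `a` and second-column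
entries `b` (all 0-indexed): box `q < r` of the first column carries entry `a q`,
box `r + p` of the second column carries entry `b p`. -/
def entryOf (r s : ℕ) (a : Fin r → Fin (r + s)) (b : Fin s → Fin (r + s)) :
    Fin (r + s) → Fin (r + s) := fun x =>
  if h : x.val < r then a ⟨x.val, h⟩ else b ⟨x.val - r, by have := x.isLt; omega⟩

open Finset

section Greedy

variable {α : Type*} [DecidableEq α] (A : Finset α) (pick : ℕ → Finset α → α)

def greedyRemaining : ℕ → Finset α
  | 0 => A
  | p + 1 => (greedyRemaining p).erase (pick p (greedyRemaining p))

def greedySeq (p : ℕ) : α := pick p (greedyRemaining A pick p)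

theorem greedyRemaining_eq_sdiff (p : ℕ) :
    greedyRemaining A pick p = A \ (range p).image (greedySeq A pick) := by
  induction p with
  | zero => simp [greedyRemaining]
  | succ p ih =>
    rw [range_add_one, image_insert, sdiff_insert, ← ih]
    rfl

theorem mem_greedyRemaining {p : ℕ} {x : α} :
    x ∈ greedyRemaining A pick p ↔ x ∈ A ∧ ∀ q < p, greedySeq A pick q ≠ x := by
  simp [greedyRemaining_eq_sdiff]

variable {A pick}

theorem exists_mem_greedyRemaining {B : Finset α} (hB : B ⊆ A) {p : ℕ} (hp : p < #B) :
    ∃ x ∈ B, x ∈ greedyRemaining A pick p := by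
  have hcard : #((range p).image (greedySeq A pick)) ≤ p :=
    card_image_le.trans (card_range p).le
  obtain ⟨x, hx⟩ : (B \ (range p).image (greedySeq A pick)).Nonempty := by
    rw [← card_pos]
    have := le_card_sdiff ((range p).image (greedySeq A pick)) B
    omega
  rw [mem_sdiff] at hx
  exact ⟨x, hx.1, greedyRemaining_eq_sdiff A pick p ▸ mem_sdiff.2 ⟨hB hx.1, hx.2⟩⟩

theorem greedySeq_injective {n : ℕ}
    (hmem : ∀ p < n, greedySeq A pick p ∈ greedyRemaining A pick p) :
    Function.Injective fun q : Fin n => greedySeq A pick q :=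
  .of_lt_imp_ne fun q p hqp =>
    ((mem_greedyRemaining A pick).1 (hmem p p.isLt)).2 q hqp

theorem range_greedySeq {n : ℕ}
    (hmem : ∀ p < n, greedySeq A pick p ∈ greedyRemaining A pick p) (hA : #A = n) :
    Set.range (fun q : Fin n => greedySeq A pick q) = A := by
  have hsub : univ.image (fun q : Fin n => greedySeq A pick q) ⊆ A := by
    simp only [subset_iff, mem_image, mem_univ, true_and, forall_exists_index]
    rintro _ q rfl
    exact ((mem_greedyRemaining A pick).1 (hmem q q.isLt)).1
  have heq := eq_of_subset_of_card_le hsub (by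
    rw [card_image_of_injective _ (greedySeq_injective hmem), card_univ, Fintype.card_fin, hA])
  rw [← Fintype.coe_image_univ, heq]

end Greedy

section StarPick

variable {α : Type*} [LinearOrder α] {s : ℕ} (b : Fin s → α) (d : α)

-- `d` is a junk value, returned only when there is nothing left to pick.
def starPick (p : ℕ) (R : Finset α) : α :=
  if h : p < s then ((R.filter (· < b ⟨p, h⟩)).max).unbotD d else R.min.untopD d

theorem isGreatest_starPick (p : Fin s) {R : Finset α} (hne : (R.filter (· < b p)).Nonempty) :
    IsGreatest ↑(R.filter (· < b p)) (starPick b d p R) := by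
  rw [starPick, dif_pos p.isLt, ← coe_max' hne, WithBot.unbotD_coe]
  exact isGreatest_max' _ hne

theorem isLeast_starPick {p : ℕ} (hp : s ≤ p) {R : Finset α} (hne : R.Nonempty) :
    IsLeast ↑R (starPick b d p R) := by
  rw [starPick, dif_neg hp.not_gt, ← coe_min' hne, WithTop.untopD_coe]
  exact isLeast_min' _ hne

end StarPick

section TwoColumn

variable {α : Type*} [LinearOrder α] {r s : ℕ} {a : Fin r → α} {b : Fin s → α}

theorem filter_lt_greedyRemaining_nonempty (hrs : s ≤ r) (ha : StrictMono a)
    (hcol : ∀ p : Fin s, a (Fin.castLE hrs p) < b p) (pick : ℕ → Finset α → α) (p : Fin s) :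
    ((greedyRemaining (univ.image a) pick p).filter (· < b p)).Nonempty := by
  have hB : #((Iic (Fin.castLE hrs p)).image a) = p + 1 := by
    rw [card_image_of_injective _ ha.injective, Fin.card_Iic, Fin.val_castLE]
  obtain ⟨x, hxB, hx⟩ := exists_mem_greedyRemaining (pick := pick) (p := p)
    (image_subset_image (subset_univ _)) (by rw [hB]; omega)
  obtain ⟨q, hq, rfl⟩ := mem_image.1 hxB
  exact ⟨a q, mem_filter.2 ⟨hx, (ha.monotone (mem_Iic.1 hq)).trans_lt (hcol p)⟩⟩

theorem greedyRemaining_nonempty (ha : Function.Injective a) (pick : ℕ → Finset α → α)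
    {p : ℕ} (hp : p < r) : (greedyRemaining (univ.image a) pick p).Nonempty := by
  obtain ⟨x, -, hx⟩ := exists_mem_greedyRemaining (pick := pick) (subset_refl (univ.image a))
    (by rwa [card_image_of_injective _ ha, card_univ, Fintype.card_fin])
  exact ⟨x, hx⟩

theorem greedySeq_starPick_mem (hrs : s ≤ r) (ha : StrictMono a)
    (hcol : ∀ p : Fin s, a (Fin.castLE hrs p) < b p) (d : α) :
    ∀ p < r, greedySeq (univ.image a) (starPick b d) p ∈
      greedyRemaining (univ.image a) (starPick b d) p := by
  intro p hpr
  by_cases hps : p < s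
  · exact (mem_filter.1 (isGreatest_starPick b d ⟨p, hps⟩
      (filter_lt_greedyRemaining_nonempty hrs ha hcol (starPick b d) ⟨p, hps⟩)).1).1
  · exact (isLeast_starPick b d (not_lt.1 hps) (greedyRemaining_nonempty ha.injective _ hpr)).1

theorem mem_greedyRemaining_image_iff (pick : ℕ → Finset α → α) {p : ℕ} (hp : p ≤ r) {x : α} :
    x ∈ greedyRemaining (univ.image a) pick p ↔
      x ∈ Set.range a ∧ ∀ q : Fin r, q.val < p → greedySeq (univ.image a) pick q ≠ x := by
  rw [mem_greedyRemaining, mem_image_univ_iff_mem_range]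
  exact and_congr_right fun _ =>
    ⟨fun h q hq => h q hq, fun h q hq => h ⟨q, hq.trans_le hp⟩ hq⟩

theorem isGreatest_greedySeq_starPick (hrs : s ≤ r) (ha : StrictMono a)
    (hcol : ∀ p : Fin s, a (Fin.castLE hrs p) < b p) (d : α) (p : Fin s) :
    IsGreatest {x | x ∈ Set.range a ∧
        (∀ q : Fin r, q.val < p.val → greedySeq (univ.image a) (starPick b d) q ≠ x) ∧ x < b p}
      (greedySeq (univ.image a) (starPick b d) p) := by
  have hset : {x | x ∈ Set.range a ∧
      (∀ q : Fin r, q.val < p.val → greedySeq (univ.image a) (starPick b d) q ≠ x) ∧ x < b p} =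
      ↑((greedyRemaining (univ.image a) (starPick b d) p).filter (· < b p)) := by
    ext x
    rw [coe_filter, Set.mem_ofPred, Set.mem_ofPred,
      mem_greedyRemaining_image_iff _ (p.isLt.le.trans hrs), and_assoc]
  rw [hset]
  exact isGreatest_starPick b d p (filter_lt_greedyRemaining_nonempty hrs ha hcol _ p)

theorem isLeast_greedySeq_starPick (ha : Function.Injective a) (d : α) (p : Fin r)
    (hp : s ≤ p.val) :
    IsLeast {x | x ∈ Set.range a ∧
        ∀ q : Fin r, q.val < p.val → greedySeq (univ.image a) (starPick b d) q ≠ x}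
      (greedySeq (univ.image a) (starPick b d) p) := by
  have hset : {x | x ∈ Set.range a ∧
      ∀ q : Fin r, q.val < p.val → greedySeq (univ.image a) (starPick b d) q ≠ x} =
      ↑(greedyRemaining (univ.image a) (starPick b d) p) := by
    ext x
    rw [mem_coe, mem_greedyRemaining_image_iff _ p.isLt.le, Set.mem_ofPred]
  rw [hset]
  exact isLeast_starPick b d hp (greedyRemaining_nonempty ha _ p.isLt)

end TwoColumn

theorem range_entryOf (r s : ℕ) (a : Fin r → Fin (r + s)) (b : Fin s → Fin (r + s)) :
    Set.range (entryOf r s a b) = Set.range a ∪ Set.range b := by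
  ext x
  simp only [Set.mem_range, Set.mem_union, entryOf]
  constructor
  · rintro ⟨y, rfl⟩
    split_ifs
    exacts [Or.inl ⟨_, rfl⟩, Or.inr ⟨_, rfl⟩]
  · rintro (⟨q, rfl⟩ | ⟨p, rfl⟩)
    · exact ⟨Fin.castAdd s q, by simp⟩
    · exact ⟨Fin.natAdd r p, by simp⟩

theorem mem_range_of_surjective_entryOf_of_lt {r s : ℕ} (hs : 0 < s) {a : Fin r → Fin (r + s)}
    {b : Fin s → Fin (r + s)} (hsurj : Function.Surjective (entryOf r s a b))
    (hb : Monotone b) {x : Fin (r + s)} (hx : x < b ⟨0, hs⟩) : x ∈ Set.range a := by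
  have := range_entryOf r s a b ▸ hsurj.range_eq ▸ Set.mem_univ x
  refine this.resolve_right ?_
  rintro ⟨p, rfl⟩
  exact (hb (show (⟨0, hs⟩ : Fin s) ≤ p from Nat.zero_le _)).not_gt hx

theorem Fin.val_eq_sub_one_of_isGreatest_Iio {n : ℕ} {m c : Fin n}
    (h : IsGreatest (Set.Iio c) m) : m.val = c.val - 1 := by
  have hmc : m.val < c.val := h.1
  have hle : (⟨c.val - 1, by omega⟩ : Fin n) ≤ m := h.2 (Fin.lt_def.2 (by dsimp only; omega))
  exact le_antisymm (by omega) (Fin.le_def.1 hle)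

/-- given a standard two-column tableau `T` (first-column entries
`a_1 < ... < a_r`, second-column entries `b_1 < ... < b_s`, all 0-indexed here), the
greedy construction of `T*` is well defined and row-standard: there exists an injective
`astar` with the same values as `a` such that `a*_1 = b_1 - 1`, for `p ≤ s` the value
`a*_p` is the greatest yet-unused first-column entry `< b_p` (and in particular
`a*_p < b_p`, so `T*` is row-standard), and for `p > s` the value `a*_p` is the least
yet-unused first-column entry. -/
theorem stmt13 (r s : ℕ) (hrs : s ≤ r) (hs : 0 < s)
    (a : Fin r → Fin (r + s)) (b : Fin s → Fin (r + s))
    (ha : StrictMono a) (hb : StrictMono b)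
    (hcol : ∀ p : Fin s, a (Fin.castLE hrs p) < b p)
    (hbij : Function.Bijective (entryOf r s a b)) :
    ∃ astar : Fin r → Fin (r + s),
      Function.Injective astar ∧
      Set.range astar = Set.range a ∧
      (astar ⟨0, by omega⟩).val = (b ⟨0, hs⟩).val - 1 ∧
      (∀ p : Fin s,
        astar (Fin.castLE hrs p) < b p ∧
        IsGreatest {x : Fin (r + s) | x ∈ Set.range a ∧
            (∀ q : Fin r, q.val < p.val → astar q ≠ x) ∧ x < b p}
          (astar (Fin.castLE hrs p))) ∧
      (∀ p : Fin r, s ≤ p.val →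
        IsLeast {x : Fin (r + s) | x ∈ Set.range a ∧
            ∀ q : Fin r, q.val < p.val → astar q ≠ x}
          (astar p)) := by
  have hmem := greedySeq_starPick_mem hrs ha hcol (b := b) (b ⟨0, hs⟩)
  have hgreatest := isGreatest_greedySeq_starPick hrs ha hcol (b ⟨0, hs⟩)
  refine ⟨fun q => greedySeq (univ.image a) (starPick b (b ⟨0, hs⟩)) q,
    greedySeq_injective hmem, ?_, ?_, fun p => ⟨(hgreatest p).1.2.2, hgreatest p⟩,
    isLeast_greedySeq_starPick ha.injective _⟩
  · rw [range_greedySeq hmem (by rw [card_image_of_injective _ ha.injective, card_univ,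
      Fintype.card_fin]), Fintype.coe_image_univ]
  · have hIio : {x | x ∈ Set.range a ∧ (∀ q : Fin r, q.val < 0 →
        greedySeq (univ.image a) (starPick b (b ⟨0, hs⟩)) q ≠ x) ∧ x < b ⟨0, hs⟩} =
        Set.Iio (b ⟨0, hs⟩) := by
      ext x
      simpa using mem_range_of_surjective_entryOf_of_lt hs hbij.2 hb.monotone
    exact Fin.val_eq_sub_one_of_isGreatest_Iio (hIio ▸ hgreatest ⟨0, hs⟩)
end

section
/- Let T' be a row-standard tableau of two-column shape, obtained from the tableau T̄ (1,…,r in column one, r+1,…,n in column two) by switching entries i < j with i ≤ r. For all 0 ≤ a < b ≤ n, s_{b/a}(T') ≤ s_{b/a}(T̄) + 1. -/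
/-- Row-standardness of a filling of the two-column shape (column lengths `r`, `s`),
encoded by a permutation of `Fin (r+s)` (box ↦ entry, 0-indexed; the `p`-th row of
length two consists of the boxes `p` and `r + p`). -/
def RowStd (r s : ℕ) (f : Equiv.Perm (Fin (r + s))) : Prop :=
  ∀ p : Fin s,
    f ⟨p.val, Nat.lt_of_lt_of_le p.isLt (Nat.le_add_left s r)⟩
      < f ⟨r + p.val, Nat.add_lt_add_left p.isLt r⟩

/-- `sInv r s f a b` is the invariant `s_{b/a}(T')` of the tableau encoded by `f`:
the number of rows `p` of length two with `a < a'_p < b'_p ≤ b`, where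
`a'_p, b'_p` are the 1-indexed entries of row `p` (hence the `+ 1`'s). -/
noncomputable def sInv (r s : ℕ) (f : Equiv.Perm (Fin (r + s))) (a b : ℕ) : ℕ :=
  Set.ncard {p : Fin s |
    a < (f ⟨p.val, Nat.lt_of_lt_of_le p.isLt (Nat.le_add_left s r)⟩).val + 1 ∧
    (f ⟨p.val, Nat.lt_of_lt_of_le p.isLt (Nat.le_add_left s r)⟩).val
      < (f ⟨r + p.val, Nat.add_lt_add_left p.isLt r⟩).val ∧
    (f ⟨r + p.val, Nat.add_lt_add_left p.isLt r⟩).val + 1 ≤ b}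

lemma aux_card {α : Type*} [Finite α] (S S' : Set α) (h : (S' \ S).Subsingleton) :
    S'.ncard ≤ S.ncard + 1 := by
  have hsub : S' ⊆ (S' ∩ S) ∪ (S' \ S) := by
    intro x hx
    by_cases hxS : x ∈ S
    · exact Or.inl ⟨hx, hxS⟩
    · exact Or.inr ⟨hx, hxS⟩
  have hd : (S' \ S).ncard ≤ 1 := by
    rcases h.eq_empty_or_singleton with he | ⟨x, he⟩ <;> rw [he] <;> simp
  calc S'.ncard ≤ ((S' ∩ S) ∪ (S' \ S)).ncard :=
        Set.ncard_le_ncard hsub (Set.toFinite _)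
    _ ≤ (S' ∩ S).ncard + (S' \ S).ncard := Set.ncard_union_le _ _
    _ ≤ S.ncard + 1 :=
        add_le_add (Set.ncard_le_ncard Set.inter_subset_right (Set.toFinite _)) hd

/-- if the row-standard tableau `T'` is obtained from `T̄` (the identity
filling) by switching two entries `i < j` with `i` in the first column (`i < r`,
0-indexed), then `s_{b/a}(T') ≤ s_{b/a}(T̄) + 1` for all `a < b`. -/
theorem stmt16 (r s : ℕ) (hrs : s ≤ r) (i j : Fin (r + s))
    (hir : i.val < r) (hij : i < j) (hrow : RowStd r s (Equiv.swap i j)) :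
    ∀ a b : ℕ, sInv r s (Equiv.swap i j) a b ≤ sInv r s (Equiv.refl (Fin (r + s))) a b + 1 := by
  intro a b
  unfold sInv
  apply aux_card
  -- notation
  have hij' : i.val < j.val := hij
  set f := Equiv.swap i j with hf
  -- a row not touching i or j is unchanged; classify elements of the difference
  have main : ∀ p : Fin s, p ∈
      ({p : Fin s |
        a < (f ⟨p.val, Nat.lt_of_lt_of_le p.isLt (Nat.le_add_left s r)⟩).val + 1 ∧
        (f ⟨p.val, Nat.lt_of_lt_of_le p.isLt (Nat.le_add_left s r)⟩).val
          < (f ⟨r + p.val, Nat.add_lt_add_left p.isLt r⟩).val ∧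
        (f ⟨r + p.val, Nat.add_lt_add_left p.isLt r⟩).val + 1 ≤ b} \
      {p : Fin s |
        a < ((Equiv.refl (Fin (r+s))) ⟨p.val, Nat.lt_of_lt_of_le p.isLt (Nat.le_add_left s r)⟩).val + 1 ∧
        ((Equiv.refl (Fin (r+s))) ⟨p.val, Nat.lt_of_lt_of_le p.isLt (Nat.le_add_left s r)⟩).val
          < ((Equiv.refl (Fin (r+s))) ⟨r + p.val, Nat.add_lt_add_left p.isLt r⟩).val ∧
        ((Equiv.refl (Fin (r+s))) ⟨r + p.val, Nat.add_lt_add_left p.isLt r⟩).val + 1 ≤ b}) →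
      p.val = i.val ∨ r + p.val = j.val := by
    intro p ⟨hp', hpS⟩
    simp only [Set.mem_setOf_eq, Equiv.refl_apply, Fin.val_mk] at hp' hpS
    by_contra hc
    push_neg at hc
    obtain ⟨h1, h2⟩ := hc
    -- box2 p ≠ i, ≠ j
    have hb2i : (⟨r + p.val, Nat.add_lt_add_left p.isLt r⟩ : Fin (r+s)) ≠ i := by
      intro h; have := congrArg Fin.val h; simp at this; omega
    have hb2j : (⟨r + p.val, Nat.add_lt_add_left p.isLt r⟩ : Fin (r+s)) ≠ j := by
      intro h; have := congrArg Fin.val h; simp at this; omega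
    rw [hf, Equiv.swap_apply_of_ne_of_ne hb2i hb2j] at hp'
    simp only [Fin.val_mk] at hp'
    by_cases hpj : p.val = j.val
    · -- box1 p = j, entry is i; row is (i, r+j) : then the row was already counted in S
      have hb1 : (⟨p.val, Nat.lt_of_lt_of_le p.isLt (Nat.le_add_left s r)⟩ : Fin (r+s)) = j :=
        Fin.ext hpj
      rw [hb1, Equiv.swap_apply_right] at hp'
      exact hpS ⟨by omega, by omega, by omega⟩
    · -- row untouched
      have hb1i : (⟨p.val, Nat.lt_of_lt_of_le p.isLt (Nat.le_add_left s r)⟩ : Fin (r+s)) ≠ i := by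
        intro h; have := congrArg Fin.val h; simp at this; omega
      have hb1j : (⟨p.val, Nat.lt_of_lt_of_le p.isLt (Nat.le_add_left s r)⟩ : Fin (r+s)) ≠ j := by
        intro h; have := congrArg Fin.val h; simp at this; omega
      rw [Equiv.swap_apply_of_ne_of_ne hb1i hb1j] at hp'
      exact hpS hp'
  -- the mixed case is impossible (unless the two rows coincide)
  have mixed : ∀ p₁ p₂ : Fin s, p₁ ∈
      ({p : Fin s |
        a < (f ⟨p.val, Nat.lt_of_lt_of_le p.isLt (Nat.le_add_left s r)⟩).val + 1 ∧
        (f ⟨p.val, Nat.lt_of_lt_of_le p.isLt (Nat.le_add_left s r)⟩).val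
          < (f ⟨r + p.val, Nat.add_lt_add_left p.isLt r⟩).val ∧
        (f ⟨r + p.val, Nat.add_lt_add_left p.isLt r⟩).val + 1 ≤ b} \
      {p : Fin s |
        a < ((Equiv.refl (Fin (r+s))) ⟨p.val, Nat.lt_of_lt_of_le p.isLt (Nat.le_add_left s r)⟩).val + 1 ∧
        ((Equiv.refl (Fin (r+s))) ⟨p.val, Nat.lt_of_lt_of_le p.isLt (Nat.le_add_left s r)⟩).val
          < ((Equiv.refl (Fin (r+s))) ⟨r + p.val, Nat.add_lt_add_left p.isLt r⟩).val ∧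
        ((Equiv.refl (Fin (r+s))) ⟨r + p.val, Nat.add_lt_add_left p.isLt r⟩).val + 1 ≤ b}) →
      p₂ ∈
      ({p : Fin s |
        a < (f ⟨p.val, Nat.lt_of_lt_of_le p.isLt (Nat.le_add_left s r)⟩).val + 1 ∧
        (f ⟨p.val, Nat.lt_of_lt_of_le p.isLt (Nat.le_add_left s r)⟩).val
          < (f ⟨r + p.val, Nat.add_lt_add_left p.isLt r⟩).val ∧
        (f ⟨r + p.val, Nat.add_lt_add_left p.isLt r⟩).val + 1 ≤ b} \
      {p : Fin s |
        a < ((Equiv.refl (Fin (r+s))) ⟨p.val, Nat.lt_of_lt_of_le p.isLt (Nat.le_add_left s r)⟩).val + 1 ∧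
        ((Equiv.refl (Fin (r+s))) ⟨p.val, Nat.lt_of_lt_of_le p.isLt (Nat.le_add_left s r)⟩).val
          < ((Equiv.refl (Fin (r+s))) ⟨r + p.val, Nat.add_lt_add_left p.isLt r⟩).val ∧
        ((Equiv.refl (Fin (r+s))) ⟨r + p.val, Nat.add_lt_add_left p.isLt r⟩).val + 1 ≤ b}) →
      p₁.val = i.val → r + p₂.val = j.val → p₁ = p₂ := by
    intro p₁ p₂ ⟨hp₁', hp₁S⟩ ⟨hp₂', hp₂S⟩ h1 h2
    by_contra hne
    simp only [Set.mem_setOf_eq, Equiv.refl_apply, Fin.val_mk] at hp₁' hp₁S hp₂' hp₂S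
    -- r + i.val ≠ j.val, else p₁ = p₂
    have hrij : r + i.val ≠ j.val := by
      intro h; exact hne (Fin.ext (by omega))
    -- evaluate f on row p₁ : (j.val, r + p₁.val)
    have hb1 : (⟨p₁.val, Nat.lt_of_lt_of_le p₁.isLt (Nat.le_add_left s r)⟩ : Fin (r+s)) = i :=
      Fin.ext h1
    have hb2i : (⟨r + p₁.val, Nat.add_lt_add_left p₁.isLt r⟩ : Fin (r+s)) ≠ i := by
      intro h; have := congrArg Fin.val h; simp at this; omega
    have hb2j : (⟨r + p₁.val, Nat.add_lt_add_left p₁.isLt r⟩ : Fin (r+s)) ≠ j := by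
      intro h; have := congrArg Fin.val h; simp at this; omega
    rw [hb1, hf, Equiv.swap_apply_left, Equiv.swap_apply_of_ne_of_ne hb2i hb2j] at hp₁'
    simp only [Fin.val_mk] at hp₁'
    -- evaluate f on row p₂ : (p₂.val, i.val)
    have hc1i : (⟨p₂.val, Nat.lt_of_lt_of_le p₂.isLt (Nat.le_add_left s r)⟩ : Fin (r+s)) ≠ i := by
      intro h; have := congrArg Fin.val h; simp at this
      exact hne (Fin.ext (by omega))
    have hc1j : (⟨p₂.val, Nat.lt_of_lt_of_le p₂.isLt (Nat.le_add_left s r)⟩ : Fin (r+s)) ≠ j := by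
      intro h; have := congrArg Fin.val h; simp at this; omega
    have hc2 : (⟨r + p₂.val, Nat.add_lt_add_left p₂.isLt r⟩ : Fin (r+s)) = j :=
      Fin.ext h2
    rw [hc2, hf, Equiv.swap_apply_right, Equiv.swap_apply_of_ne_of_ne hc1i hc1j] at hp₂'
    simp only [Fin.val_mk] at hp₂'
    -- now pure arithmetic
    simp only [not_and, not_le] at hp₁S
    omega
  intro p₁ hp₁ p₂ hp₂
  rcases main p₁ hp₁ with h1 | h1 <;> rcases main p₂ hp₂ with h2 | h2
  · exact Fin.ext (by omega)
  · exact mixed p₁ p₂ hp₁ hp₂ h1 h2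
  · exact (mixed p₂ p₁ hp₂ hp₁ h2 h1).symm
  · exact Fin.ext (by omega)
end
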